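/- arXiv:2008.09476 — 3 statements merged into one kernel-verified Lean document; each statement's English description precedes it below -/
import Mathlib

section
/- For every real number s with 0 < s < 2, the function h_s is integrable on the interval (1/2, 1) and ∫_{1/2}^{1} h_s(x) dx < 0. -/
/-!
Write `t = (1 - x) / x ∈ (0, 1)`. Then
`h_s(x) = -(1 - x) ^ (1 - s) * (1 - t ^ s) / (1 - t)`, which is negative, and
`1 - t ^ s ≤ (s + 1) (1 - t)` (since `t ≤ t ^ s` for `s ≤ 1`, Bernoulli for `s ≥ 1`) gives
`|h_s(x)| ≤ (s + 1) (1 - x) ^ (1 - s)`, integrable near `1` because `1 - s > -1`.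
-/

open MeasureTheory Set Real

lemma one_sub_rpow_le_mul_one_sub {t s : ℝ} (ht0 : 0 ≤ t) (ht1 : t ≤ 1) (hs : 0 ≤ s) :
    1 - t ^ s ≤ (s + 1) * (1 - t) := by
  rcases le_total s 1 with hs1 | hs1
  · have := self_le_rpow_of_le_one ht0 ht1 hs1
    nlinarith
  · have := one_add_mul_self_le_rpow_one_add (by linarith : -1 ≤ t - 1) hs1
    rw [add_sub_cancel] at this
    nlinarith

lemma rpow_neg_sub_rpow_neg_le {a b s : ℝ} (ha : 0 < a) (hab : a ≤ b) (hs : 0 ≤ s) :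
    a ^ (-s) - b ^ (-s) ≤ (s + 1) * a ^ (-s) * ((b - a) / b) := by
  have hb : 0 < b := ha.trans_le hab
  have hfactor : a ^ (-s) - b ^ (-s) = a ^ (-s) * (1 - (a / b) ^ s) := by
    rw [div_rpow ha.le hb.le, rpow_neg ha.le, rpow_neg hb.le]
    field_simp [(rpow_pos_of_pos ha s).ne']
  have hratio : 1 - a / b = (b - a) / b := by field_simp
  have := mul_le_mul_of_nonneg_left
    (one_sub_rpow_le_mul_one_sub (div_nonneg ha.le hb.le) ((div_le_one hb).2 hab) hs)
    (rpow_nonneg ha.le (-s))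
  rw [hfactor, ← hratio]
  linarith

section

variable {s x : ℝ}

lemma integrand_neg (hs : 0 < s) (hx : x ∈ Ioo (1 / 2 : ℝ) 1) :
    x * (1 - x) / (2 * x - 1) * (x ^ (-s) - (1 - x) ^ (-s)) < 0 := by
  obtain ⟨hx1, hx2⟩ := hx
  have hfactor : 0 < x * (1 - x) / (2 * x - 1) :=
    div_pos (mul_pos (by linarith) (by linarith)) (by linarith)
  have hdiff : x ^ (-s) - (1 - x) ^ (-s) < 0 :=
    sub_neg.2 (rpow_lt_rpow_of_neg (by linarith) (by linarith) (neg_neg_of_pos hs))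
  exact mul_neg_of_pos_of_neg hfactor hdiff

lemma abs_integrand_le (hs : 0 ≤ s) (hx : x ∈ Ioo (1 / 2 : ℝ) 1) :
    |x * (1 - x) / (2 * x - 1) * (x ^ (-s) - (1 - x) ^ (-s))| ≤ (s + 1) * (1 - x) ^ (1 - s) := by
  obtain ⟨hx1, hx2⟩ := hx
  have h1x : 0 < 1 - x := by linarith
  have hx0 : 0 < x := by linarith
  have hden : 0 < 2 * x - 1 := by linarith
  have hfactor : 0 < x * (1 - x) / (2 * x - 1) :=
    div_pos (mul_pos hx0 h1x) hden
  have hdiff := rpow_neg_sub_rpow_neg_le h1x (by linarith : 1 - x ≤ x) hs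
  rw [show x - (1 - x) = 2 * x - 1 by ring] at hdiff
  have hdiff_nonneg : 0 ≤ (1 - x) ^ (-s) - x ^ (-s) :=
    sub_nonneg.2 (rpow_le_rpow_of_nonpos h1x (by linarith) (by linarith))
  rw [abs_mul, abs_of_pos hfactor, abs_sub_comm, abs_of_nonneg hdiff_nonneg]
  calc x * (1 - x) / (2 * x - 1) * ((1 - x) ^ (-s) - x ^ (-s))
      ≤ x * (1 - x) / (2 * x - 1) * ((s + 1) * (1 - x) ^ (-s) * ((2 * x - 1) / x)) :=
        mul_le_mul_of_nonneg_left hdiff hfactor.le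
    _ = (s + 1) * ((1 - x) * (1 - x) ^ (-s)) := by
        generalize 2 * x - 1 = d at hden
        field_simp [hx0.ne', hden.ne']
    _ = (s + 1) * (1 - x) ^ (1 - s) := by
        rw [sub_eq_add_neg 1 s, rpow_add h1x, rpow_one]

end

lemma integrableOn_one_sub_rpow {a r : ℝ} (hr : -1 < r) :
    IntegrableOn (fun x : ℝ => (1 - x) ^ r) (Ioo a 1) := by
  have h := (intervalIntegral.intervalIntegrable_rpow' (a := 1 - a) (b := 0) hr).comp_sub_left 1
  simp only [sub_sub_cancel, sub_zero] at h
  exact (intervalIntegrable_iff.1 h).mono_set (Ioo_subset_Ioc_self.trans Ioc_subset_uIoc)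

/-- For every real `s` with `0 < s < 2`, the function
`h_s(x) = [x(1−x)/(2x−1)]·(x^{−s} − (1−x)^{−s})` is integrable on `(1/2, 1)` and
`∫_{1/2}^1 h_s(x) dx < 0`. -/
theorem stmt2 (s : ℝ) (hs0 : 0 < s) (hs2 : s < 2) :
    MeasureTheory.IntegrableOn
        (fun x : ℝ => x * (1 - x) / (2 * x - 1) * (x ^ (-s) - (1 - x) ^ (-s)))
        (Set.Ioo (1 / 2 : ℝ) 1) ∧
      (∫ x in Set.Ioo (1 / 2 : ℝ) 1,
        x * (1 - x) / (2 * x - 1) * (x ^ (-s) - (1 - x) ^ (-s))) < 0 := by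
  set f : ℝ → ℝ := fun x => x * (1 - x) / (2 * x - 1) * (x ^ (-s) - (1 - x) ^ (-s))
  have hcont : ContinuousOn f (Ioo (1 / 2) 1) := fun x ⟨hx1, hx2⟩ =>
    ContinuousAt.continuousWithinAt (by fun_prop (disch := first | linarith | left; linarith))
  have hint : IntegrableOn f (Ioo (1 / 2) 1) :=
    ((integrableOn_one_sub_rpow (by linarith : -1 < 1 - s)).const_mul (s + 1)).mono'
      (hcont.aestronglyMeasurable measurableSet_Ioo)
      ((ae_restrict_iff' measurableSet_Ioo).2 <| .of_forall fun x hx =>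
        (norm_eq_abs _).trans_le (abs_integrand_le hs0.le hx))
  refine ⟨hint, ?_⟩
  have hpos : 0 < ∫ x in (1 / 2 : ℝ)..1, -f x :=
    intervalIntegral.intervalIntegral_pos_of_pos_on
      ((intervalIntegrable_iff_integrableOn_Ioo_of_le (by norm_num)).2 hint.neg)
      (fun x hx => neg_pos.2 (integrand_neg hs0 hx)) (by norm_num)
  rw [intervalIntegral.integral_neg, intervalIntegral.integral_of_le (by norm_num),
    integral_Ioc_eq_integral_Ioo] at hpos
  linarith
end

section
/- For every real number s with 0 < s < 2, the function g_s is integrable on (1/2,1) and lim_{r→∞} (1/(2r+1)) · ∑_{p=r+1}^{2r} g_s( p/(2r+1) ) = ∫_{1/2}^{1} g_s(x) dx, where the limit is taken over positive integers r. -/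
/-!
Write `g_s(x) = x(1-x) · (F(x) - F(1-x)) / (2x-1)` with `F(y) = y^{-s}(-1 + s log y)`. Near `1/2`
this is a difference quotient of the `C¹` function `F`, hence bounded; near `1` it is dominated by
`(1-x)^{1-s}(1 + s|log(1-x)|) ≲ (1-x)^{-s/2}`, which is integrable since `s < 2`. The Riemann sum
is the integral of the step function taking the value of `g_s` at the left endpoint of each cell.
These step functions converge pointwise to `g_s` by continuity, and since the dominating function
is increasing in `x`, the left-endpoint values are dominated by it as well, so dominated
convergence applies.
-/

open Filter MeasureTheory Set Topology Real

lemma mem_Ico_div_iff_floor_eq {N x : ℝ} {p : ℕ} (hN : 0 < N) (hx : 0 ≤ x) :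
    x ∈ Ico (p / N) ((p + 1) / N) ↔ ⌊x * N⌋₊ = p := by
  rw [mem_Ico, div_le_iff₀ hN, lt_div_iff₀ hN, Nat.floor_eq_iff (by positivity)]

noncomputable def riemannStep (h : ℝ → ℝ) (r : ℕ) (x : ℝ) : ℝ :=
  ∑ p ∈ Finset.Icc (r + 1) (2 * r),
    (Ico ((p : ℝ) / (2 * r + 1)) ((p + 1) / (2 * r + 1))).indicator (fun _ => h (p / (2 * r + 1))) x

section RiemannStep

variable {h : ℝ → ℝ} {r : ℕ}

lemma Ico_div_subset_Ioo_of_mem_Icc {p : ℕ} (hp : p ∈ Finset.Icc (r + 1) (2 * r)) :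
    Ico ((p : ℝ) / (2 * r + 1)) ((p + 1) / (2 * r + 1)) ⊆ Ioo (1 / 2) 1 := by
  obtain ⟨hp₁, hp₂⟩ := Finset.mem_Icc.1 hp
  have hN : (0 : ℝ) < 2 * r + 1 := by positivity
  have hp₁' : (r : ℝ) + 1 ≤ p := by exact_mod_cast hp₁
  have hp₂' : (p : ℝ) ≤ 2 * r := by exact_mod_cast hp₂
  refine (Ico_subset_Ioo_left ?_).trans (Ioo_subset_Ioo_right ?_)
  · rw [div_lt_div_iff₀ two_pos hN]; linarith
  · rw [div_le_one hN]; linarith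

lemma integral_riemannStep :
    ∫ x in Ioo (1 / 2) 1, riemannStep h r x =
      1 / (2 * r + 1) * ∑ p ∈ Finset.Icc (r + 1) (2 * r), h (p / (2 * r + 1)) := by
  have hN : (0 : ℝ) < 2 * r + 1 := by positivity
  unfold riemannStep
  rw [integral_finsetSum _ fun p _ => by
    exact (integrableOn_const measure_Ioo_lt_top.ne).indicator measurableSet_Ico, Finset.mul_sum]
  refine Finset.sum_congr rfl fun p hp => ?_
  rw [integral_indicator_const _ measurableSet_Ico, measureReal_restrict_apply measurableSet_Ico,
    inter_eq_left.2 (Ico_div_subset_Ioo_of_mem_Icc hp),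
    Real.volume_real_Ico_of_le (by gcongr; linarith), smul_eq_mul]
  congr 1
  field_simp
  ring

lemma riemannStep_apply {x : ℝ} (hx : 0 ≤ x) :
    riemannStep h r x = if ⌊x * (2 * r + 1)⌋₊ ∈ Finset.Icc (r + 1) (2 * r)
      then h (⌊x * (2 * r + 1)⌋₊ / (2 * r + 1)) else 0 := by
  have hN : (0 : ℝ) < 2 * r + 1 := by positivity
  simp only [riemannStep, indicator_apply, mem_Ico_div_iff_floor_eq hN hx, Finset.sum_ite_eq]

lemma abs_riemannStep_le {D : ℝ → ℝ} (hD : MonotoneOn D (Ioo (1 / 2) 1))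
    (hhD : ∀ x ∈ Ioo (1 / 2 : ℝ) 1, |h x| ≤ D x) {x : ℝ} (hx : x ∈ Ioo (1 / 2 : ℝ) 1) :
    |riemannStep h r x| ≤ D x := by
  have hN : (0 : ℝ) < 2 * r + 1 := by positivity
  have hx₀ : 0 ≤ x := by linarith [hx.1]
  rw [riemannStep_apply hx₀]
  split_ifs with hp
  · set t := (⌊x * (2 * r + 1)⌋₊ : ℝ) / (2 * r + 1)
    have htx : t ≤ x := div_le_of_le_mul₀ hN.le hx₀ (Nat.floor_le (by positivity))
    have ht : t ∈ Ioo (1 / 2 : ℝ) 1 := by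
      have hp₁ : (r : ℝ) + 1 ≤ ⌊x * (2 * r + 1)⌋₊ := by exact_mod_cast (Finset.mem_Icc.1 hp).1
      exact ⟨by rw [lt_div_iff₀ hN]; linarith, htx.trans_lt hx.2⟩
    exact (hhD t ht).trans (hD ht hx htx)
  · rw [abs_zero]
    exact (abs_nonneg _).trans (hhD x hx)

lemma tendsto_riemannStep {x : ℝ} (hx : x ∈ Ioo (1 / 2 : ℝ) 1) (hh : ContinuousAt h x) :
    Tendsto (fun r => riemannStep h r x) atTop (𝓝 (h x)) := by
  obtain ⟨hx₁, hx₂⟩ := hx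
  have hN : Tendsto (fun r : ℕ => 2 * (r : ℝ) + 1) atTop atTop :=
    tendsto_atTop_add_const_right _ 1 (tendsto_natCast_atTop_atTop.const_mul_atTop two_pos)
  have hgrid : Tendsto (fun r : ℕ => (⌊x * (2 * r + 1)⌋₊ : ℝ) / (2 * r + 1)) atTop (𝓝 x) :=
    (tendsto_nat_floor_mul_div_atTop (by linarith)).comp hN
  have hcell : ∀ᶠ r : ℕ in atTop, ⌊x * (2 * r + 1)⌋₊ ∈ Finset.Icc (r + 1) (2 * r) := by
    filter_upwards [eventually_ge_atTop ⌈(1 - x) / (2 * x - 1)⌉₊] with r hr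
    have hr' : (1 - x) / (2 * x - 1) ≤ r := (Nat.ceil_le).1 hr
    rw [div_le_iff₀ (by linarith)] at hr'
    refine Finset.mem_Icc.2 ⟨(Nat.le_floor_iff (by positivity)).2 ?_, ?_⟩
    · push_cast; linarith
    · have : ⌊x * (2 * r + 1)⌋₊ < 2 * r + 1 := by
        rw [Nat.floor_lt (by positivity)]; push_cast; nlinarith
      omega
  refine (hh.tendsto.comp hgrid).congr' ?_
  filter_upwards [hcell] with r hr
  rw [Function.comp_apply, riemannStep_apply (by linarith), if_pos hr]

theorem tendsto_riemannSum_of_dominated {D : ℝ → ℝ} (hh : ContinuousOn h (Ioo (1 / 2) 1))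
    (hDint : IntegrableOn D (Ioo (1 / 2) 1)) (hD : MonotoneOn D (Ioo (1 / 2) 1))
    (hhD : ∀ x ∈ Ioo (1 / 2 : ℝ) 1, |h x| ≤ D x) :
    Tendsto (fun r : ℕ => 1 / (2 * (r : ℝ) + 1) *
        ∑ p ∈ Finset.Icc (r + 1) (2 * r), h (p / (2 * r + 1)))
      atTop (𝓝 (∫ x in Ioo (1 / 2) 1, h x)) := by
  simp_rw [← integral_riemannStep]
  refine tendsto_integral_of_dominated_convergence D (fun r => ?_) hDint ?_ ?_
  · exact (Finset.measurable_sum _ fun p _ =>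
      measurable_const.indicator measurableSet_Ico).aestronglyMeasurable
  · exact fun r => (ae_restrict_iff' measurableSet_Ioo).2 <| ae_of_all _ fun x hx =>
      (Real.norm_eq_abs _).trans_le (abs_riemannStep_le hD hhD hx)
  · exact (ae_restrict_iff' measurableSet_Ioo).2 <| ae_of_all _ fun x hx =>
      tendsto_riemannStep hx (hh.continuousAt (isOpen_Ioo.mem_nhds hx))

end RiemannStep

noncomputable def F (s y : ℝ) : ℝ := y ^ (-s) * (-1 + s * log y)

noncomputable def g (s x : ℝ) : ℝ := x * (1 - x) / (2 * x - 1) * (F s x - F s (1 - x))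

lemma contDiffOn_F (s : ℝ) : ContDiffOn ℝ 1 (F s) (Ioi 0) := by
  intro y hy
  have hy₀ : y ≠ 0 := (mem_Ioi.1 hy).ne'
  unfold F
  fun_prop (disch := simp [*])

lemma continuousOn_g (s : ℝ) : ContinuousOn (g s) (Ioo (1 / 2) 1) := by
  rintro x ⟨hx₁, hx₂⟩
  have h₀ : x ≠ 0 := by linarith
  have h₁ : 1 - x ≠ 0 := by linarith
  have h₂ : 2 * x - 1 ≠ 0 := by linarith
  unfold g F
  apply ContinuousAt.continuousWithinAt
  fun_prop (disch := simp [*])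

lemma abs_mul_F_le {s u : ℝ} (hs₀ : 0 ≤ s) (hs₂ : s < 2) (hu₀ : 0 < u) (hu₁ : u ≤ 1) :
    |u * F s u| ≤ (1 + s / (1 - s / 2)) * u ^ (-s / 2) := by
  have hsplit : u * F s u = u ^ (-s / 2) * (u ^ (1 - s / 2) * (-1 + s * log u)) := by
    rw [F, ← mul_assoc, ← mul_assoc, ← rpow_add hu₀, show -s / 2 + (1 - s / 2) = 1 + -s by ring,
      rpow_add hu₀, rpow_one]
  have hpow : u ^ (1 - s / 2) ≤ 1 := rpow_le_one hu₀.le hu₁ (by linarith)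
  have hlog : |log u * u ^ (1 - s / 2)| ≤ 1 / (1 - s / 2) :=
    (abs_log_mul_self_rpow_lt u _ hu₀ hu₁ (by linarith)).le
  rw [hsplit, abs_mul, abs_of_pos (rpow_pos_of_pos hu₀ _), mul_comm]
  gcongr
  calc |u ^ (1 - s / 2) * (-1 + s * log u)|
      = |-u ^ (1 - s / 2) + s * (log u * u ^ (1 - s / 2))| := by ring_nf
    _ ≤ u ^ (1 - s / 2) + s * |log u * u ^ (1 - s / 2)| := by
        grw [abs_add_le, abs_neg, abs_mul, abs_of_nonneg hs₀, abs_of_pos (rpow_pos_of_pos hu₀ _)]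
    _ ≤ 1 + s * (1 / (1 - s / 2)) := by gcongr
    _ = 1 + s / (1 - s / 2) := by ring

lemma integrableOn_sub_rpow {a b c : ℝ} (ha : -1 < a) (hbc : b ≤ c) :
    IntegrableOn (fun x => (c - x) ^ a) (Ioo b c) := by
  have h := (intervalIntegral.intervalIntegrable_rpow' ha (a := 0) (b := c - b)).comp_sub_left c
  simp only [sub_zero, sub_sub_cancel] at h
  exact (intervalIntegrable_iff_integrableOn_Ioo_of_le hbc).1 h.symm

lemma abs_g_le_of_lipschitzOnWith {s x : ℝ} {K : NNReal}
    (hK : LipschitzOnWith K (F s) (Icc (1 / 4) 1)) (hx₁ : 1 / 2 < x) (hx₂ : x ≤ 3 / 4) :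
    |g s x| ≤ K := by
  have hd : 0 < 2 * x - 1 := by linarith
  have hF : |F s x - F s (1 - x)| ≤ K * (2 * x - 1) := by
    have := hK.dist_le_mul x ⟨by linarith, by linarith⟩ (1 - x) ⟨by linarith, by linarith⟩
    rwa [Real.dist_eq, Real.dist_eq, show x - (1 - x) = 2 * x - 1 by ring, abs_of_pos hd] at this
  have hq₀ : 0 ≤ x * (1 - x) := mul_nonneg (by linarith) (by linarith)
  have hq₁ : x * (1 - x) ≤ 1 := by nlinarith
  calc |g s x| = x * (1 - x) / (2 * x - 1) * |F s x - F s (1 - x)| := by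
        rw [g, abs_mul, abs_of_nonneg (div_nonneg hq₀ hd.le)]
    _ ≤ x * (1 - x) / (2 * x - 1) * (K * (2 * x - 1)) := by gcongr
    _ = x * (1 - x) * K := by rw [mul_comm (K : ℝ), ← mul_assoc, div_mul_cancel₀ _ hd.ne']
    _ ≤ K := mul_le_of_le_one_left K.coe_nonneg hq₁

lemma abs_g_le_near_one {s x : ℝ} (hx₁ : 2 / 3 ≤ x) (hx₂ : x < 1) :
    |g s x| ≤ 2 * (|(1 - x) * F s x| + |(1 - x) * F s (1 - x)|) := by
  have hd : 0 < 2 * x - 1 := by linarith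
  calc |g s x| = x / (2 * x - 1) * |(1 - x) * F s x - (1 - x) * F s (1 - x)| := by
        rw [← abs_of_nonneg (div_nonneg (by linarith) hd.le), ← abs_mul, g]
        ring_nf
    _ ≤ 2 * (|(1 - x) * F s x| + |(1 - x) * F s (1 - x)|) := by
        gcongr
        · rw [div_le_iff₀ hd]; linarith
        · exact abs_sub _ _

lemma exists_abs_g_le {s : ℝ} (hs₀ : 0 ≤ s) (hs₂ : s < 2) :
    ∃ C, 0 ≤ C ∧ ∀ x ∈ Ioo (1 / 2 : ℝ) 1, |g s x| ≤ C * (1 - x) ^ (-s / 2) := by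
  have hF : ContDiffOn ℝ 1 (F s) (Icc (1 / 4) 1) :=
    (contDiffOn_F s).mono fun y hy => lt_of_lt_of_le (by norm_num) hy.1
  obtain ⟨K, hK⟩ := hF.exists_lipschitzOnWith one_ne_zero (convex_Icc _ _) isCompact_Icc
  obtain ⟨B, hB⟩ := isCompact_Icc.exists_bound_of_continuousOn hF.continuousOn
  have hB₀ : 0 ≤ B := (norm_nonneg _).trans (hB 1 ⟨by norm_num, le_rfl⟩)
  set A := 1 + s / (1 - s / 2)
  have hA₀ : 0 ≤ A := add_nonneg zero_le_one (div_nonneg hs₀ (by linarith))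
  have hC₀ : 0 ≤ K + 2 * B + 2 * A := by positivity
  refine ⟨K + 2 * B + 2 * A, hC₀, fun x ⟨hx₁, hx₂⟩ => ?_⟩
  have hP : 1 ≤ (1 - x) ^ (-s / 2) :=
    one_le_rpow_of_pos_of_le_one_of_nonpos (by linarith) (by linarith) (by linarith)
  rcases le_or_gt x (3 / 4) with hx | hx
  · calc |g s x| ≤ K := abs_g_le_of_lipschitzOnWith hK hx₁ hx
      _ ≤ K + 2 * B + 2 * A := by linarith
      _ ≤ (K + 2 * B + 2 * A) * (1 - x) ^ (-s / 2) :=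
          le_mul_of_one_le_right hC₀ hP
  · have hFx : |(1 - x) * F s x| ≤ B * (1 - x) ^ (-s / 2) := by
      rw [abs_mul, abs_of_pos (by linarith)]
      have := hB x ⟨by linarith, hx₂.le⟩
      rw [Real.norm_eq_abs] at this
      nlinarith
    have hF1x := abs_mul_F_le hs₀ hs₂ (u := 1 - x) (by linarith) (by linarith)
    calc |g s x| ≤ 2 * (|(1 - x) * F s x| + |(1 - x) * F s (1 - x)|) :=
          abs_g_le_near_one (by linarith) hx₂
      _ ≤ 2 * (B * (1 - x) ^ (-s / 2) + A * (1 - x) ^ (-s / 2)) := by gcongr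
      _ ≤ (K + 2 * B + 2 * A) * (1 - x) ^ (-s / 2) := by nlinarith [K.coe_nonneg]

/-- For every real `s` with `0 < s < 2`, the function
`g_s(x) = [x(1−x)/(2x−1)]·(x^{−s}(−1+s ln x) − (1−x)^{−s}(−1+s ln(1−x)))`
is integrable on `(1/2, 1)` and
`(1/(2r+1)) · ∑_{p=r+1}^{2r} g_s(p/(2r+1)) → ∫_{1/2}^1 g_s(x) dx` as the integer `r → ∞`. -/
theorem stmt4 (s : ℝ) (hs0 : 0 < s) (hs2 : s < 2) :
    MeasureTheory.IntegrableOn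
        (fun x : ℝ => x * (1 - x) / (2 * x - 1) *
          (x ^ (-s) * (-1 + s * Real.log x) - (1 - x) ^ (-s) * (-1 + s * Real.log (1 - x))))
        (Set.Ioo (1 / 2 : ℝ) 1) ∧
      Filter.Tendsto
        (fun r : ℕ => (1 / (2 * (r : ℝ) + 1)) *
          ∑ p ∈ Finset.Icc (r + 1) (2 * r),
            (fun x : ℝ => x * (1 - x) / (2 * x - 1) *
              (x ^ (-s) * (-1 + s * Real.log x) -
                (1 - x) ^ (-s) * (-1 + s * Real.log (1 - x))))
              ((p : ℝ) / (2 * (r : ℝ) + 1)))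
        Filter.atTop
        (nhds (∫ x in Set.Ioo (1 / 2 : ℝ) 1,
          x * (1 - x) / (2 * x - 1) *
            (x ^ (-s) * (-1 + s * Real.log x) -
              (1 - x) ^ (-s) * (-1 + s * Real.log (1 - x))))) := by
  obtain ⟨C, hC₀, hC⟩ := exists_abs_g_le hs0.le hs2
  set D := fun x : ℝ => C * (1 - x) ^ (-s / 2)
  have hDint : IntegrableOn D (Ioo (1 / 2) 1) :=
    (integrableOn_sub_rpow (by linarith) (by norm_num)).const_mul C
  have hDmono : MonotoneOn D (Ioo (1 / 2) 1) := fun x _ y hy hxy =>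
    mul_le_mul_of_nonneg_left
      (rpow_le_rpow_of_nonpos (by linarith [hy.2]) (by linarith) (by linarith)) hC₀
  have hg : IntegrableOn (g s) (Ioo (1 / 2) 1) :=
    hDint.mono' ((continuousOn_g s).aestronglyMeasurable measurableSet_Ioo) <|
      (ae_restrict_iff' measurableSet_Ioo).2 <| ae_of_all _ fun x hx =>
        (Real.norm_eq_abs _).trans_le (hC x hx)
  exact ⟨hg, tendsto_riemannSum_of_dominated (continuousOn_g s) hDint hDmono hC⟩
end

section
/- For every real number s > 2 and every integer r ≥ 1, | ∑_{p=⌊√r⌋+1}^{2r} p^{2−s}(1 − s·ln p)/(2p−2r−1) | ≤ 2 r^{1−s/2} (1 + s·ln(2r)) (1 + ln(2r)); in particular, for each fixed s > 2 this sum tends to 0 as the integer r tends to infinity. -/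
/-!
For `p > √r` and `s ≥ 2` we have `p ^ (2 - s) ≤ r ^ (1 - s / 2)`, and
`|1 - s log p| ≤ 1 + s log (2r)` for `p ≤ 2r`, so each term is at most
`r ^ (1 - s / 2) (1 + s log (2r)) / |2p - 2r - 1|`. The denominators are odd integers: over
`1 ≤ p ≤ 2r` each value `±(2j + 1)`, `j < r`, occurs once, and `∑_{j<r} 1/(2j+1)`
is dominated by the harmonic number `H_r ≤ 1 + log r`. The resulting bound is
`r ^ (1 - s / 2)` times a polynomial in `log r`, so it tends to `0` for `s > 2`.
-/

open Filter Finset Real Topology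

lemma sum_range_one_div_two_mul_add_one_le (n : ℕ) :
    ∑ j ∈ range n, (1 : ℝ) / (2 * j + 1) ≤ 1 + log n :=
  calc ∑ j ∈ range n, (1 : ℝ) / (2 * j + 1)
      ≤ ∑ j ∈ range n, (1 : ℝ) / (j + 1) := by gcongr; linarith
    _ = harmonic n := by simp [harmonic, one_div]
    _ ≤ 1 + log n := harmonic_le_one_add_log n

lemma log_natCast_le_log_two_mul (r : ℕ) : log r ≤ log (2 * r) := by
  rcases r.eq_zero_or_pos with rfl | hr
  · simp
  · have : (0 : ℝ) < r := by exact_mod_cast hr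
    exact log_le_log this (by linarith)

lemma two_mul_natCast_sub_sub_one_ne_zero (p r : ℕ) : (2 * p - 2 * r - 1 : ℝ) ≠ 0 := by
  have : (2 * p - 2 * r - 1 : ℤ) ≠ 0 := by omega
  exact_mod_cast this

lemma sum_Icc_one_div_abs_two_mul_sub_sub_one (r : ℕ) :
    ∑ p ∈ Icc 1 (2 * r), 1 / |(2 * p - 2 * r - 1 : ℝ)| =
      2 * ∑ j ∈ range r, (1 : ℝ) / (2 * j + 1) := by
  rw [← Ico_add_one_right_eq_Icc, sum_Ico_eq_sum_range, Nat.add_sub_cancel, Nat.two_mul r,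
    sum_range_add, two_mul (∑ j ∈ range r, _)]
  congr 1
  · rw [← sum_range_reflect (δ := ℝ)]
    refine sum_congr rfl fun j hj => ?_
    have hj := mem_range.mp hj
    rw [show 2 * (((1 + (r - 1 - j)) : ℕ) : ℝ) - 2 * r - 1 = -(2 * j + 1) by
        rw [Nat.cast_add, Nat.cast_sub (by omega), Nat.cast_sub (by omega)]; push_cast; ring,
      abs_neg, abs_of_pos (by positivity)]
  · refine sum_congr rfl fun j _ => ?_
    rw [show 2 * (((1 + (r + j) : ℕ)) : ℝ) - 2 * r - 1 = 2 * j + 1 by push_cast; ring,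
      abs_of_pos (by positivity)]

lemma sum_Icc_one_div_abs_two_mul_sub_sub_one_le (r : ℕ) :
    ∑ p ∈ Icc 1 (2 * r), 1 / |(2 * p - 2 * r - 1 : ℝ)| ≤ 2 * (1 + log (2 * r)) := by
  rw [sum_Icc_one_div_abs_two_mul_sub_sub_one]
  linarith [sum_range_one_div_two_mul_add_one_le r, log_natCast_le_log_two_mul r]

lemma rpow_two_sub_le_rpow_one_sub_half {p r s : ℝ} (hs : 2 ≤ s) (hr : 0 < r) (hp : 0 ≤ p)
    (hrp : r ≤ p ^ 2) : p ^ (2 - s) ≤ r ^ (1 - s / 2) :=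
  calc p ^ (2 - s) = (p ^ 2) ^ (1 - s / 2) := by
        rw [← rpow_natCast_mul hp]; push_cast; ring_nf
    _ ≤ r ^ (1 - s / 2) := rpow_le_rpow_of_nonpos hr hrp (by linarith)

lemma abs_one_sub_mul_log_le {s x y : ℝ} (hs : 0 ≤ s) (hx : 1 ≤ x) (hxy : x ≤ y) :
    |1 - s * log x| ≤ 1 + s * log y := by
  have hlogx : 0 ≤ log x := log_nonneg hx
  have hlog : log x ≤ log y := log_le_log (by linarith) hxy
  exact abs_le.mpr ⟨by nlinarith, by nlinarith⟩

noncomputable def tailSum (s : ℝ) (r : ℕ) : ℝ :=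
  ∑ p ∈ Icc (Nat.sqrt r + 1) (2 * r),
    (p : ℝ) ^ (2 - s) * (1 - s * log p) / (2 * p - 2 * r - 1)

noncomputable def tailBound (s x : ℝ) : ℝ :=
  2 * x ^ (1 - s / 2) * (1 + s * log (2 * x)) * (1 + log (2 * x))

lemma abs_tailSum_term_le {s : ℝ} (hs : 2 ≤ s) {r p : ℕ}
    (hp : p ∈ Icc (Nat.sqrt r + 1) (2 * r)) :
    |(p : ℝ) ^ (2 - s) * (1 - s * log p) / (2 * p - 2 * r - 1)| ≤
      r ^ (1 - s / 2) * (1 + s * log (2 * r)) * (1 / |(2 * p - 2 * r - 1 : ℝ)|) := by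
  obtain ⟨hsqrt, hp2r⟩ := mem_Icc.mp hp
  have hr : (0 : ℝ) < r := by exact_mod_cast (show 0 < r by omega)
  have hp1 : (1 : ℝ) ≤ p := by exact_mod_cast (show 1 ≤ p by omega)
  have hrp : (r : ℝ) ≤ (p : ℝ) ^ 2 := by exact_mod_cast (Nat.sqrt_lt'.mp hsqrt).le
  have hp2r' : (p : ℝ) ≤ 2 * r := by exact_mod_cast hp2r
  have hD := abs_pos.mpr (two_mul_natCast_sub_sub_one_ne_zero p r)
  rw [abs_div, abs_mul, abs_of_nonneg (by positivity : (0 : ℝ) ≤ p ^ (2 - s)),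
    ← div_eq_mul_one_div]
  gcongr
  · exact rpow_two_sub_le_rpow_one_sub_half hs hr (by positivity) hrp
  · exact abs_one_sub_mul_log_le (by linarith) hp1 hp2r'

lemma abs_tailSum_le {s : ℝ} (hs : 2 ≤ s) (r : ℕ) : |tailSum s r| ≤ tailBound s r := by
  set C : ℝ := r ^ (1 - s / 2) * (1 + s * log (2 * r))
  have hC : 0 ≤ C := by
    have : 0 ≤ log (2 * r) := by exact_mod_cast log_natCast_nonneg (2 * r)
    have : 0 ≤ (r : ℝ) ^ (1 - s / 2) := by positivity
    positivity
  calc |tailSum s r|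
      ≤ ∑ p ∈ Icc (Nat.sqrt r + 1) (2 * r), C * (1 / |(2 * p - 2 * r - 1 : ℝ)|) :=
        (abs_sum_le_sum_abs _ _).trans (sum_le_sum fun p hp => abs_tailSum_term_le hs hp)
    _ ≤ ∑ p ∈ Icc 1 (2 * r), C * (1 / |(2 * p - 2 * r - 1 : ℝ)|) :=
        sum_le_sum_of_subset_of_nonneg (Icc_subset_Icc_left (by omega))
          fun _ _ _ => by positivity
    _ = C * ∑ p ∈ Icc 1 (2 * r), 1 / |(2 * p - 2 * r - 1 : ℝ)| := (mul_sum _ _ _).symm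
    _ ≤ C * (2 * (1 + log (2 * r))) := by
        gcongr; exact sum_Icc_one_div_abs_two_mul_sub_sub_one_le r
    _ = tailBound s r := by simp only [C, tailBound]; ring

lemma tendsto_rpow_mul_one_add_mul_log_mul {a : ℝ} (ha : a < 0) (t : ℝ) {c : ℝ} (hc : 0 < c) :
    Tendsto (fun x : ℝ => x ^ a * (1 + t * log (c * x))) atTop (𝓝 0) := by
  have hpow : Tendsto (fun x : ℝ => x ^ a) atTop (𝓝 0) := by
    simpa using tendsto_rpow_neg_atTop (neg_pos.mpr ha)
  have hlog : Tendsto (fun x : ℝ => x ^ a * log x) atTop (𝓝 0) := by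
    refine (isLittleO_log_rpow_atTop (neg_pos.mpr ha)).tendsto_div_nhds_zero.congr' ?_
    filter_upwards [eventually_gt_atTop 0] with x hx
    rw [rpow_neg hx.le, div_inv_eq_mul, mul_comm]
  have := (hpow.mul_const (1 + t * log c)).add (hlog.const_mul t)
  rw [zero_mul, mul_zero, add_zero] at this
  refine this.congr' ?_
  filter_upwards [eventually_gt_atTop 0] with x hx
  rw [log_mul hc.ne' hx.ne']
  ring

lemma tendsto_tailBound {s : ℝ} (hs : 2 < s) : Tendsto (tailBound s) atTop (𝓝 0) := by
  have ha : (1 - s / 2) / 2 < 0 := by linarith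
  have := ((tendsto_rpow_mul_one_add_mul_log_mul ha s two_pos).mul
    (tendsto_rpow_mul_one_add_mul_log_mul ha 1 two_pos)).const_mul 2
  rw [mul_zero, mul_zero] at this
  refine this.congr' ?_
  filter_upwards [eventually_gt_atTop 0] with x hx
  have hsplit : x ^ (1 - s / 2) = x ^ ((1 - s / 2) / 2) * x ^ ((1 - s / 2) / 2) := by
    rw [← rpow_add hx, add_halves]
  rw [tailBound, hsplit]
  ring

/-- For every real `s > 2` and every integer `r ≥ 1`,
`|∑_{p=⌊√r⌋+1}^{2r} p^{2−s}(1 − s ln p)/(2p−2r−1)| ≤ 2 r^{1−s/2}(1 + s ln(2r))(1 + ln(2r))`;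
in particular, for fixed `s > 2` this sum tends to `0` as the integer `r → ∞`. -/
theorem stmt8 (s : ℝ) (hs : 2 < s) :
    (∀ r : ℕ, 1 ≤ r →
      |∑ p ∈ Finset.Icc (Nat.sqrt r + 1) (2 * r),
          (p : ℝ) ^ (2 - s) * (1 - s * Real.log (p : ℝ)) /
            (2 * (p : ℝ) - 2 * (r : ℝ) - 1)| ≤
        2 * (r : ℝ) ^ (1 - s / 2) * (1 + s * Real.log (2 * (r : ℝ))) *
          (1 + Real.log (2 * (r : ℝ)))) ∧
      Filter.Tendsto
        (fun r : ℕ =>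
          ∑ p ∈ Finset.Icc (Nat.sqrt r + 1) (2 * r),
            (p : ℝ) ^ (2 - s) * (1 - s * Real.log (p : ℝ)) /
              (2 * (p : ℝ) - 2 * (r : ℝ) - 1))
        Filter.atTop (nhds 0) :=
  ⟨fun r _ => abs_tailSum_le hs.le r,
    squeeze_zero_norm (fun r => abs_tailSum_le hs.le r)
      ((tendsto_tailBound hs).comp tendsto_natCast_atTop_atTop)⟩
end
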